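/- For a single centered cluster with variance Δ > 0 and learning rate 0 < η < 2/Δ, the fixed point of the online SGD order-parameter ODEs gives asymptotic generalisation error ε_∞ = (1 − 2/π)/(1 − ηΔ/2). In particular ε_∞ ≥ 1 − 2/π with equality only in the limit η → 0, and ε_∞ → ∞ as η → (2/Δ)⁻. -/

import Mathlib

open Filter Topology

/-- `m` plays the role of `βR`, which equals `2/π` at `R* = β/Δ`; the stationarity condition is
then linear in `ΔQ`. -/
theorem fixedPoint_error_eq {m Δ η Q : ℝ} (hη : η ≠ 0) (hηΔ : η * Δ ≠ 2)
    (hQ : 2 * η * (m - Δ * Q) + η ^ 2 * Δ * (1 + Δ * Q - 2 * m) = 0) :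
    1 - 2 * m + Δ * Q = (1 - m) / (1 - η * Δ / 2) := by
  have hden : 1 - η * Δ / 2 ≠ 0 := fun h => hηΔ (by linarith)
  have hQ' : Δ * Q * (2 - η * Δ) = 2 * m + η * Δ * (1 - 2 * m) :=
    mul_left_cancel₀ hη (by linear_combination -hQ)
  rw [eq_div_iff hden]
  linear_combination hQ' / 2

theorem sqrt_two_mul_div_pi_mul_div_self {Δ : ℝ} (hΔ : 0 < Δ) :
    Real.sqrt (2 * Δ / Real.pi) * (Real.sqrt (2 * Δ / Real.pi) / Δ) = 2 / Real.pi := by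
  rw [← mul_div_assoc, Real.mul_self_sqrt (by positivity)]
  field_simp

theorem one_sub_two_div_pi_pos : 0 < 1 - 2 / Real.pi := by
  have : 2 / Real.pi < 1 := (div_lt_one Real.pi_pos).mpr (by linarith [Real.pi_gt_three])
  linarith

theorem lt_div_one_sub {a t : ℝ} (ha : 0 < a) (ht₀ : 0 < t) (ht₁ : t < 1) :
    a < a / (1 - t) := by
  simpa using div_lt_div_of_pos_left ha (sub_pos.mpr ht₁) (sub_lt_self 1 ht₀)

theorem tendsto_one_sub_mul_div_two_nhdsLT {Δ : ℝ} (hΔ : 0 < Δ) :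
    Tendsto (fun e : ℝ => 1 - e * Δ / 2) (𝓝[<] (2 / Δ)) (𝓝[>] 0) := by
  refine tendsto_nhdsWithin_of_tendsto_nhds_of_eventually_within _ ?_ ?_
  · have hc : Continuous fun e : ℝ => 1 - e * Δ / 2 := by fun_prop
    have hzero : 1 - 2 / Δ * Δ / 2 = 0 := by field_simp; ring
    simpa [hzero] using (hc.tendsto (2 / Δ)).mono_left nhdsWithin_le_nhds
  · filter_upwards [self_mem_nhdsWithin] with e he
    have : e * Δ < 2 := (lt_div_iff₀ hΔ).mp he
    simp only [Set.mem_Ioi]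
    linarith

theorem tendsto_div_one_sub_mul_div_two_atTop {a Δ : ℝ} (ha : 0 < a) (hΔ : 0 < Δ) :
    Tendsto (fun e : ℝ => a / (1 - e * Δ / 2)) (𝓝[<] (2 / Δ)) atTop := by
  simpa only [div_eq_mul_inv, Pi.inv_apply] using
    ((tendsto_one_sub_mul_div_two_nhdsLT hΔ).inv_tendsto_nhdsGT_zero).const_mul_atTop ha

/-- Single cluster, finite learning rate: at the SGD fixed point the asymptotic
generalisation error is `(1 − 2/π)/(1 − ηΔ/2)`; it strictly exceeds `1 − 2/π` and
diverges as `η → (2/Δ)⁻`. -/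
theorem stmt12 (Δ η R Q : ℝ) (hΔ : 0 < Δ) (hη : 0 < η) (hη2 : η < 2 / Δ)
    (hR : R = Real.sqrt (2 * Δ / Real.pi) / Δ)
    (hQ : 2 * η * (Real.sqrt (2 * Δ / Real.pi) * R - Δ * Q)
        + η ^ 2 * Δ * (1 + Δ * Q - 2 * Real.sqrt (2 * Δ / Real.pi) * R) = 0) :
    1 - 2 * Real.sqrt (2 * Δ / Real.pi) * R + Δ * Q
        = (1 - 2 / Real.pi) / (1 - η * Δ / 2) ∧
    1 - 2 / Real.pi < (1 - 2 / Real.pi) / (1 - η * Δ / 2) ∧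
    Tendsto (fun e : ℝ => (1 - 2 / Real.pi) / (1 - e * Δ / 2))
        (nhdsWithin (2 / Δ) (Set.Iio (2 / Δ))) atTop := by
  have hβR : Real.sqrt (2 * Δ / Real.pi) * R = 2 / Real.pi :=
    hR ▸ sqrt_two_mul_div_pi_mul_div_self hΔ
  have h2βR : 2 * Real.sqrt (2 * Δ / Real.pi) * R = 2 * (2 / Real.pi) := by
    rw [mul_assoc, hβR]
  have hηΔ : η * Δ < 2 := (lt_div_iff₀ hΔ).mp hη2
  refine ⟨?_, ?_, tendsto_div_one_sub_mul_div_two_atTop one_sub_two_div_pi_pos hΔ⟩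
  · rw [hβR, h2βR] at hQ
    rw [h2βR]
    exact fixedPoint_error_eq hη.ne' hηΔ.ne hQ
  · exact lt_div_one_sub one_sub_two_div_pi_pos (by positivity) (by linarith)
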